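/- For every p,q∈[0,1]^5 and every δ∈(0,1), the determinant D(p,q,1_4) is strictly positive, where 1_4=(1,1,1,1). -/

import Mathlib

noncomputable section
namespace ZDGame

open Matrix

/-- membership in the unit box `[0,1]^5` -/
def unitBox (v : Fin 5 → ℝ) : Prop := ∀ i, 0 ≤ v i ∧ v i ≤ 1

/-- the Markov transition matrix of the repeated game -/
def Mmat (p q : Fin 5 → ℝ) : Matrix (Fin 4) (Fin 4) ℝ :=
  !![p 1 * q 1, p 1 * (1 - q 1), (1 - p 1) * q 1, (1 - p 1) * (1 - q 1);
     p 2 * q 3, p 2 * (1 - q 3), (1 - p 2) * q 3, (1 - p 2) * (1 - q 3);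
     p 3 * q 2, p 3 * (1 - q 2), (1 - p 3) * q 2, (1 - p 3) * (1 - q 2);
     p 4 * q 4, p 4 * (1 - q 4), (1 - p 4) * q 4, (1 - p 4) * (1 - q 4)]

/-- the initial distribution v(0) -/
def vInit (p q : Fin 5 → ℝ) : Fin 4 → ℝ :=
  ![p 0 * q 0, p 0 * (1 - q 0), (1 - p 0) * q 0, (1 - p 0) * (1 - q 0)]

def SYvec (T S : ℝ) : Fin 4 → ℝ := ![1, T, S, 0]
def SXvec (T S : ℝ) : Fin 4 → ℝ := ![1, S, T, 0]
def ones4 : Fin 4 → ℝ := ![1, 1, 1, 1]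

/-- average expected payoff with payoff vector `f` -/
def payoff (δ : ℝ) (p q : Fin 5 → ℝ) (f : Fin 4 → ℝ) : ℝ :=
  (1 - δ) * dotProduct (Matrix.vecMul (vInit p q) (1 - δ • Mmat p q)⁻¹) f

def sX (δ T S : ℝ) (p q : Fin 5 → ℝ) : ℝ := payoff δ p q (SXvec T S)
def sY (δ T S : ℝ) (p q : Fin 5 → ℝ) : ℝ := payoff δ p q (SYvec T S)

/-- the matrix `A(p,q,f)` from the determinant representation -/
def Amat (δ : ℝ) (p q : Fin 5 → ℝ) (f : Fin 4 → ℝ) : Matrix (Fin 4) (Fin 4) ℝ :=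
  !![-1 + δ * p 1 * q 1 + (1 - δ) * p 0 * q 0, -1 + δ * p 1 + (1 - δ) * p 0,
       -1 + δ * q 1 + (1 - δ) * q 0, f 0;
     δ * p 3 * q 2 + (1 - δ) * p 0 * q 0, δ * p 3 + (1 - δ) * p 0,
       -1 + δ * q 2 + (1 - δ) * q 0, f 1;
     δ * p 2 * q 3 + (1 - δ) * p 0 * q 0, -1 + δ * p 2 + (1 - δ) * p 0,
       δ * q 3 + (1 - δ) * q 0, f 2;
     δ * p 4 * q 4 + (1 - δ) * p 0 * q 0, δ * p 4 + (1 - δ) * p 0,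
       δ * q 4 + (1 - δ) * q 0, f 3]

/-- `D(p,q,f) = det A(p,q,f)` -/
def Dd (δ : ℝ) (p q : Fin 5 → ℝ) (f : Fin 4 → ℝ) : ℝ := (Amat δ p q f).det

/-- pcZD strategy -/
def IsPcZD (δ T S : ℝ) (p : Fin 5 → ℝ) : Prop :=
  ∃ φ χ κ : ℝ, 0 < φ ∧ 1 ≤ χ ∧
    δ * p 1 + (1 - δ) * p 0 = 1 - φ * (χ - 1) * (1 - κ) ∧
    δ * p 2 + (1 - δ) * p 0 = 1 - φ * (χ * T - S - (χ - 1) * κ) ∧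
    δ * p 3 + (1 - δ) * p 0 = φ * (T - χ * S + (χ - 1) * κ) ∧
    δ * p 4 + (1 - δ) * p 0 = φ * (χ - 1) * κ

/-- partial derivative of a function of the strategy vector `q`
in the coordinate `j`, taken at `q` -/
def pderiv (f : (Fin 5 → ℝ) → ℝ) (j : Fin 5) (q : Fin 5 → ℝ) : ℝ :=
  deriv (fun t => f (Function.update q j t)) (q j)

/-- the 3×3 minor `M_ℓ` of `A(p,q,f)` (delete row `ℓ` and the 4th column);
here `ℓ : Fin 4` corresponds to the paper's `ℓ+1 ∈ {1,2,3,4}` -/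
def Mminor (δ : ℝ) (p q : Fin 5 → ℝ) (ℓ : Fin 4) : Matrix (Fin 3) (Fin 3) ℝ :=
  Matrix.of fun i j => Amat δ p q ones4 (ℓ.succAbove i) (Fin.castSucc j)

/-- the index map λ(1)=1, λ(2)=3, λ(3)=2, λ(4)=4 (0-based on the left) -/
def lamIdx : Fin 4 → Fin 5 := ![1, 3, 2, 4]

/-- the vector `r_ℓ` -/
def rvec (δ : ℝ) (p q : Fin 5 → ℝ) (ℓ : Fin 4) (i : Fin 3) : ℝ :=
  (p (lamIdx ℓ) * Amat δ p q ones4 ℓ 2 - Amat δ p q ones4 ℓ 0)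
    + Mminor δ p q ℓ i 0 - p (lamIdx ℓ) * Mminor δ p q ℓ i 2

/-- the 2×2 determinants `𝔡_ℓ`; `ℓ : Fin 4` corresponds to the paper's `ℓ+1` -/
def frakD (δ T S : ℝ) (p q : Fin 5 → ℝ) (ℓ : Fin 4) : ℝ :=
  ![ (rvec δ p q 0 0 + rvec δ p q 0 1) * (-1) - (T + S - 2) * rvec δ p q 0 2,
     (rvec δ p q 1 1 - 2 * rvec δ p q 1 2) * 1 - (T + S) * (rvec δ p q 1 0 - rvec δ p q 1 2),
     (rvec δ p q 2 0 - rvec δ p q 2 2) * (T + S) - 1 * (rvec δ p q 2 1 - 2 * rvec δ p q 2 2),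
     (rvec δ p q 3 1 + rvec δ p q 3 2) * 1 - (T + S) * rvec δ p q 3 0 ] ℓ

def u1 (δ : ℝ) (p q : Fin 5 → ℝ) : ℝ :=
  (-1 + δ * q 1 - δ * q 4) * p 0 - (-1 + δ * p 1 * q 1 - δ * p 4 * q 4)
def u2 (δ : ℝ) (p q : Fin 5 → ℝ) : ℝ :=
  (-1 + δ * q 2 - δ * q 4) * p 0 - (δ * p 3 * q 2 - δ * p 4 * q 4)
def u3 (δ : ℝ) (p q : Fin 5 → ℝ) : ℝ :=
  (δ * q 3 - δ * q 4) * p 0 - (δ * p 2 * q 3 - δ * p 4 * q 4)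

/-- the determinant `𝔡_0 = det [[u1, 1], [u2+u3, T+S]]` -/
def frakD0 (δ T S : ℝ) (p q : Fin 5 → ℝ) : ℝ :=
  u1 δ p q * (T + S) - 1 * (u2 δ p q + u3 δ p q)

end ZDGame

/-!
The transition matrix `M` of the repeated game is row-stochastic, so for `0 ≤ a < 1` the matrix
`1 - a • M` is strictly diagonally dominant and hence nonsingular by Gershgorin. Its determinant is
therefore nonzero along `a ∈ [0, δ]` and equal to `1` at `a = 0`, so
`0 < det (1 - δ • M) = (1 - δ) * D(p,q,1_4)`.
-/

namespace Matrix

theorem det_fin_four {R : Type*} [CommRing R] (A : Matrix (Fin 4) (Fin 4) R) :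
    A.det =
      A 0 0 * (A 1 1 * (A 2 2 * A 3 3 - A 2 3 * A 3 2)
        - A 1 2 * (A 2 1 * A 3 3 - A 2 3 * A 3 1)
        + A 1 3 * (A 2 1 * A 3 2 - A 2 2 * A 3 1))
      - A 0 1 * (A 1 0 * (A 2 2 * A 3 3 - A 2 3 * A 3 2)
        - A 1 2 * (A 2 0 * A 3 3 - A 2 3 * A 3 0)
        + A 1 3 * (A 2 0 * A 3 2 - A 2 2 * A 3 0))
      + A 0 2 * (A 1 0 * (A 2 1 * A 3 3 - A 2 3 * A 3 1)
        - A 1 1 * (A 2 0 * A 3 3 - A 2 3 * A 3 0)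
        + A 1 3 * (A 2 0 * A 3 1 - A 2 1 * A 3 0))
      - A 0 3 * (A 1 0 * (A 2 1 * A 3 2 - A 2 2 * A 3 1)
        - A 1 1 * (A 2 0 * A 3 2 - A 2 2 * A 3 0)
        + A 1 2 * (A 2 0 * A 3 1 - A 2 1 * A 3 0)) := by
  simp only [det_succ_row_zero, Fin.sum_univ_succ, submatrix_apply, Fin.succAbove,
    Fin.succ_zero_eq_one, Fin.succ_one_eq_two, Fin.reduceSucc, Fin.castSucc_zero, Fin.castSucc_one,
    Fin.castSucc_succ, Fin.reduceCastSucc, Fin.succ_pos, Fin.reduceLT, Fin.lt_one_iff, Fin.reduceEq,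
    Fin.val_succ, Fin.val_eq_zero, Fin.coe_ofNat_eq_mod, Nat.zero_mod, lt_self_iff_false, not_lt_zero,
    ↓reduceIte, Finset.univ_unique, Finset.sum_singleton, det_unique, Fin.default_eq_zero,
    submatrix_submatrix, Function.comp_apply]
  ring

section RowStochastic

variable {n : Type*} [Fintype n] [DecidableEq n] {M : Matrix n n ℝ}

theorem det_one_sub_smul_ne_zero_of_mem_rowStochastic (hM : M ∈ rowStochastic ℝ n) {a : ℝ}
    (ha0 : 0 ≤ a) (ha1 : a < 1) : (1 - a • M).det ≠ 0 := by
  refine det_ne_zero_of_sum_row_lt_diag fun k => ?_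
  have hoff : ∑ j ∈ Finset.univ.erase k, ‖(1 - a • M) k j‖ = a * (1 - M k k) := by
    rw [← sum_row_of_mem_rowStochastic hM k, ← Finset.add_sum_erase _ _ (Finset.mem_univ k),
      add_sub_cancel_left, Finset.mul_sum]
    refine Finset.sum_congr rfl fun j hj => ?_
    rw [sub_apply, one_apply_ne (Finset.ne_of_mem_erase hj).symm, smul_apply, smul_eq_mul, zero_sub,
      norm_neg, Real.norm_of_nonneg (mul_nonneg ha0 (nonneg_of_mem_rowStochastic hM))]
  have hdiag : a * M k k ≤ a := mul_le_of_le_one_right ha0 (le_one_of_mem_rowStochastic hM)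
  rw [hoff, sub_apply, one_apply_eq, smul_apply, smul_eq_mul, Real.norm_of_nonneg (by linarith)]
  linarith

theorem det_one_sub_smul_pos_of_mem_rowStochastic (hM : M ∈ rowStochastic ℝ n) {a : ℝ}
    (ha0 : 0 ≤ a) (ha1 : a < 1) : 0 < (1 - a • M).det := by
  set f : ℝ → ℝ := fun t => (1 - (t * a) • M).det
  have hf : Continuous f := by fun_prop
  have hne : ∀ t ∈ Set.Icc (0 : ℝ) 1, f t ≠ 0 := fun t ht =>
    det_one_sub_smul_ne_zero_of_mem_rowStochastic hM (mul_nonneg ht.1 ha0)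
      (lt_of_le_of_lt (mul_le_of_le_one_left ha0 ht.2) ha1)
  have hf0 : f 0 = 1 := by simp [f]
  by_contra! hf1
  obtain ⟨t, ht, hft⟩ := isPreconnected_Icc.intermediate_value
    (Set.right_mem_Icc.2 (zero_le_one' ℝ)) (Set.left_mem_Icc.2 (zero_le_one' ℝ)) hf.continuousOn
    ⟨by simpa [f] using hf1, hf0 ▸ zero_le_one⟩
  exact hne t ht hft

end RowStochastic

end Matrix

namespace ZDGame

open Matrix

theorem Mmat_mem_rowStochastic {p q : Fin 5 → ℝ} (hp : unitBox p) (hq : unitBox q) :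
    Mmat p q ∈ rowStochastic ℝ (Fin 4) := by
  refine mem_rowStochastic_iff_sum.2 ⟨fun i j => ?_, fun i => ?_⟩
  · fin_cases i <;> fin_cases j <;> simp only [Mmat, Fin.isValue, Fin.zero_eta,
      Fin.mk_one, Fin.reduceFinMk, of_apply, cons_val', cons_val_zero, cons_val_one, cons_val,
      cons_val_fin_one] <;>
      apply mul_nonneg <;>
      first
        | exact (hp _).1 | exact sub_nonneg.2 (hp _).2
        | exact (hq _).1 | exact sub_nonneg.2 (hq _).2
  · fin_cases i <;> simp only [Mmat, Fin.isValue, Fin.zero_eta, Fin.mk_one, Fin.reduceFinMk,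
      of_apply, cons_val', cons_val_zero, cons_val_one, cons_val, cons_val_fin_one,
      Fin.sum_univ_four] <;> ring

/-- Up to a swap of its middle rows, `A(p,q,1_4)` arises from `1 - δ • M` by column operations,
because every row of `1 - δ • M` sums to `1 - δ`. -/
theorem det_one_sub_smul_Mmat (δ : ℝ) (p q : Fin 5 → ℝ) :
    (1 - δ • Mmat p q).det = (1 - δ) * Dd δ p q ones4 := by
  rw [Dd, det_fin_four, det_fin_four]
  simp only [Amat, Mmat, ones4, Matrix.sub_apply, Matrix.smul_apply, smul_eq_mul, one_apply_eq,
    one_apply_ne, ne_eq, Fin.reduceEq, not_false_eq_true, of_apply, cons_val', cons_val_zero,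
    cons_val_one, cons_val, cons_val_fin_one]
  ring

/-- `D(p,q,1_4) > 0` for all strategies and all `δ ∈ (0,1)`. -/
theorem Dpq1_pos (δ : ℝ) (hδ0 : 0 < δ) (hδ1 : δ < 1)
    (p q : Fin 5 → ℝ) (hp : unitBox p) (hq : unitBox q) :
    0 < Dd δ p q ones4 := by
  have h := det_one_sub_smul_pos_of_mem_rowStochastic (Mmat_mem_rowStochastic hp hq) hδ0.le hδ1
  rw [det_one_sub_smul_Mmat] at h
  exact pos_of_mul_pos_right h (by linarith)

end ZDGame
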